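/- arXiv:1204.2579 — 2 statements merged into one kernel-verified Lean document; each statement's English description precedes it below -/
import Mathlib

section
/- Consistency of semiparametric Z-estimators with bundled parameters (Lemma 2.1). Suppose: (a) θ0 is the unique, well-separated zero of θ ↦ Ψ(θ, η0(θ)) on Θ, i.e. for every ε > 0 there exists δ > 0 such that |Ψ(θ, η0(θ))| ≥ δ whenever θ ∈ Θ and |θ − θ0| ≥ ε; (b) ‖η̂_n − η0‖ → 0 in probability; (c) for every sequence of reals δ_n ↓ 0, sup over θ ∈ Θ and η ∈ H with ‖η − η0‖ ≤ δ_n of |Ψ_n(θ, η(θ)) − Ψ(θ, η0(θ))| / (1 + |Ψ_n(θ, η(θ))| + |Ψ(θ, η0(θ))|) converges to 0 in probability. Then any sequence of random elements θ̂_n of Θ satisfying Ψ_n(θ̂_n, η̂_n(θ̂_n)) = o_p(1) converges in probability to θ0. -/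
/-!
If `θ̂_n` is `ε`-far from `θ0`, well-separation gives `‖Ψ(θ̂_n, η0(θ̂_n))‖ ≥ κ`. A diagonal
argument turns (b) into radii `δ_n ↓ 0` with `‖η̂_n - η0‖ < δ_n` with probability tending to one,
so (c) can be applied along `δ_n`. Outside three events of vanishing probability, with
`a = Ψ_n(θ̂_n, η̂_n(θ̂_n))` and `b = Ψ(θ̂_n, η0(θ̂_n))` we have `‖a‖ < κ/8` and
`‖a - b‖ < ρ (1 + ‖a‖ + ‖b‖)` for a small `ρ ≤ 1/2`, hence `‖b‖ < 2ρ + 3‖a‖ < κ`.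
-/

open MeasureTheory Filter Topology ProbabilityTheory
open scoped ENNReal NNReal InnerProductSpace

noncomputable section

abbrev Euc (d : ℕ) := EuclideanSpace ℝ (Fin d)

/-- `ξ n / a n → 0` in probability, i.e. `ξ n = o_p(a n)`. -/
def oP {Ω : Type*} [MeasurableSpace Ω] (P : Measure Ω) (ξ : ℕ → Ω → ℝ) (a : ℕ → ℝ) : Prop :=
  ∀ ε : ℝ, 0 < ε → Filter.Tendsto (fun n => P {ω | ε * a n ≤ ξ n ω}) Filter.atTop (nhds 0)

/-- `ξ n = O_p(a n)`: for every `ε > 0` there is `M` with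
`P(ξ n > M * a n) ≤ ε` for all sufficiently large `n`. -/
def OP {Ω : Type*} [MeasurableSpace Ω] (P : Measure Ω) (ξ : ℕ → Ω → ℝ) (a : ℕ → ℝ) : Prop :=
  ∀ ε : ℝ, 0 < ε → ∃ M : ℝ, ∀ᶠ n in Filter.atTop, P {ω | M * a n < ξ n ω} ≤ ENNReal.ofReal ε

open Classical in
/-- real-valued indicator of a proposition. -/
def ind (p : Prop) : ℝ := if p then 1 else 0

theorem Nat.exists_monotone_tendsto_atTop_forall_le (N : ℕ → ℕ) :
    ∃ φ : ℕ → ℕ, Monotone φ ∧ Tendsto φ atTop atTop ∧ ∀ᶠ n in atTop, N (φ n) ≤ n := by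
  refine ⟨fun n => Nat.findGreatest (fun k => N k ≤ n) n,
    fun a b hab => Nat.findGreatest_mono (fun k hk => hk.trans hab) hab, ?_, ?_⟩
  · refine tendsto_atTop_atTop.2 fun k => ⟨max k (N k), fun n hn => ?_⟩
    exact Nat.le_findGreatest (le_of_max_le_left hn) (le_of_max_le_right hn)
  · filter_upwards [eventually_ge_atTop (N 0)] with n hn
    exact Nat.findGreatest_spec (P := fun k => N k ≤ n) (Nat.zero_le n) hn

theorem ENNReal.exists_monotone_tendsto_diag {p : ℕ → ℕ → ℝ≥0∞}
    (hp : ∀ k, Tendsto (p k) atTop (𝓝 0)) :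
    ∃ φ : ℕ → ℕ, Monotone φ ∧ Tendsto φ atTop atTop ∧
      Tendsto (fun n => p (φ n) n) atTop (𝓝 0) := by
  have hN : ∀ k, ∃ N, ∀ n ≥ N, p k n ≤ (k : ℝ≥0∞)⁻¹ := fun k =>
    eventually_atTop.1 <| (hp k).eventually_le_const
      (ENNReal.inv_pos.2 (ENNReal.natCast_ne_top k))
  choose N hN using hN
  obtain ⟨φ, hφ, hφtop, hNφ⟩ := Nat.exists_monotone_tendsto_atTop_forall_le N
  refine ⟨φ, hφ, hφtop, tendsto_of_tendsto_of_tendsto_of_le_of_le' tendsto_const_nhds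
    (ENNReal.tendsto_inv_nat_nhds_zero.comp hφtop) (Eventually.of_forall fun _ => zero_le) ?_⟩
  filter_upwards [hNφ] with n hn using hN _ n hn

section InProbability

variable {Ω : Type*} [MeasurableSpace Ω] {P : Measure Ω}

theorem oP_one_iff {ξ : ℕ → Ω → ℝ} :
    oP P ξ (fun _ => 1) ↔ ∀ ε > 0, Tendsto (fun n => P {ω | ε ≤ ξ n ω}) atTop (𝓝 0) := by
  simp only [oP, mul_one, gt_iff_lt]

theorem oP.exists_antitone_tendsto_measure_le {X : ℕ → Ω → ℝ} (hX : oP P X (fun _ => 1)) :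
    ∃ δ : ℕ → ℝ, (∀ n, 0 < δ n) ∧ Antitone δ ∧ Tendsto δ atTop (𝓝 0) ∧
      Tendsto (fun n => P {ω | δ n ≤ X n ω}) atTop (𝓝 0) := by
  obtain ⟨φ, hφ, hφtop, hdiag⟩ := ENNReal.exists_monotone_tendsto_diag
    (p := fun k n => P {ω | 1 / ((k : ℝ) + 1) ≤ X n ω})
    fun k => oP_one_iff.1 hX _ (by positivity)
  refine ⟨fun n => 1 / ((φ n : ℝ) + 1), fun n => by positivity, fun a b hab => ?_,
    tendsto_one_div_add_atTop_nhds_zero_nat.comp hφtop, hdiag⟩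
  dsimp only
  gcongr
  exact hφ hab

theorem tendsto_measure_of_subset_union {s t u : ℕ → Set Ω} (hst : ∀ n, s n ⊆ t n ∪ u n)
    (ht : Tendsto (fun n => P (t n)) atTop (𝓝 0))
    (hu : Tendsto (fun n => P (u n)) atTop (𝓝 0)) :
    Tendsto (fun n => P (s n)) atTop (𝓝 0) := by
  refine tendsto_of_tendsto_of_tendsto_of_le_of_le tendsto_const_nhds
    (by simpa using ht.add hu) (fun _ => zero_le) fun n => ?_
  exact (measure_mono (hst n)).trans (measure_union_le _ _)

end InProbability

section RelativeDeviation

variable {F : Type*} [SeminormedAddCommGroup F]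

theorem norm_sub_div_one_add_norm_add_norm_le_one (a b : F) :
    ‖a - b‖ / (1 + ‖a‖ + ‖b‖) ≤ 1 := by
  rw [div_le_one (by positivity)]
  linarith [norm_sub_le a b]

theorem norm_lt_of_norm_sub_div_one_add_norm_add_norm_lt {a b : F} {ρ : ℝ} (hρ : ρ ≤ 1 / 2)
    (h : ‖a - b‖ / (1 + ‖a‖ + ‖b‖) < ρ) : ‖b‖ < 2 * ρ + 3 * ‖a‖ := by
  rw [div_lt_iff₀ (by positivity)] at h
  have hab : ‖b‖ - ‖a‖ ≤ ‖a - b‖ := by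
    rw [norm_sub_rev]; exact norm_sub_norm_le b a
  nlinarith [norm_nonneg a, norm_nonneg b]

end RelativeDeviation

theorem le_ciSup_ciSup_of_forall_le {ι κ : Type*} {f : ι → κ → ℝ} {C : ℝ}
    (hf : ∀ i k, f i k ≤ C) (i : ι) (k : κ) : f i k ≤ ⨆ i, ⨆ k, f i k :=
  have : Nonempty κ := ⟨k⟩
  (le_ciSup ⟨C, Set.forall_mem_range.2 (hf i)⟩ k).trans
    (le_ciSup ⟨C, Set.forall_mem_range.2 fun i => ciSup_le (hf i)⟩ i)

theorem consistency_of_bundled_Z_estimators_general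
    {d : ℕ} {E : Type*} [NormedAddCommGroup E]
    {Ω : Type*} [MeasurableSpace Ω] (P : Measure Ω)
    (Θ : Set (Euc d))
    (θ0 : Euc d)
    (Ψn : ℕ → Ω → Euc d → E → Euc d)
    (Ψ : Euc d → E → Euc d)
    (η0 : Euc d → E)
    (θhat : ℕ → Ω → Euc d) (hθhatΘ : ∀ n ω, θhat n ω ∈ Θ)
    (ηhat : ℕ → Ω → Euc d → E)
    -- (a) θ0 is the unique, well-separated zero of θ ↦ Ψ(θ, η0(θ)) on Θ
    (hsep : ∀ ε : ℝ, 0 < ε → ∃ δ : ℝ, 0 < δ ∧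
      ∀ θ ∈ Θ, ε ≤ ‖θ - θ0‖ → δ ≤ ‖Ψ θ (η0 θ)‖)
    -- (b) ‖η̂_n − η0‖ → 0 in probability (sup-norm over Θ)
    (hηcons : oP P (fun n ω => ⨆ θ : Θ, ‖ηhat n ω θ - η0 θ‖) (fun _ => 1))
    -- (c) uniform convergence condition (2.3)
    (hequic : ∀ δ : ℕ → ℝ, (∀ n, 0 < δ n) → Antitone δ →
      Filter.Tendsto δ Filter.atTop (nhds 0) →
      oP P (fun n ω =>
        ⨆ θ : Θ, ⨆ η : {η : Euc d → E // (⨆ θ' : Θ, ‖η θ' - η0 θ'‖) ≤ δ n},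
          ‖Ψn n ω θ (η.1 θ) - Ψ θ (η0 θ)‖ /
            (1 + ‖Ψn n ω θ (η.1 θ)‖ + ‖Ψ θ (η0 θ)‖)) (fun _ => 1))
    -- the near-root property Ψ_n(θ̂_n, η̂_n(θ̂_n)) = o_p(1)
    (hroot : oP P (fun n ω => ‖Ψn n ω (θhat n ω) (ηhat n ω (θhat n ω))‖) (fun _ => 1)) :
    -- conclusion: θ̂_n → θ0 in probability
    oP P (fun n ω => ‖θhat n ω - θ0‖) (fun _ => 1) := by
  refine oP_one_iff.2 fun ε hε => ?_
  obtain ⟨κ, hκ, hsepκ⟩ := hsep ε hε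
  obtain ⟨δ, hδpos, hδanti, hδ0, hηδ⟩ := hηcons.exists_antitone_tendsto_measure_le
  -- `ρ ≤ 1/2` and `ρ ≤ κ/4` make `2ρ + 3 (κ/8) < κ` in the final estimate.
  set ρ := min (1 / 2) (κ / 4)
  have hρ : 0 < ρ := lt_min (by norm_num) (by positivity)
  refine tendsto_measure_of_subset_union (fun n => ?_) hηδ <|
    tendsto_measure_of_subset_union (fun n => subset_rfl)
      (oP_one_iff.1 (hequic δ hδpos hδanti hδ0) ρ hρ) (oP_one_iff.1 hroot (κ / 8) (by positivity))
  intro ω hω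
  simp only [Set.mem_union, Set.mem_ofPred_eq]
  by_contra! ⟨hηω, hdev, hΨn⟩
  have hΨ := norm_lt_of_norm_sub_div_one_add_norm_add_norm_lt (min_le_left _ _) <|
    (le_ciSup_ciSup_of_forall_le (fun _ _ => norm_sub_div_one_add_norm_add_norm_le_one _ _)
      ⟨θhat n ω, hθhatΘ n ω⟩ ⟨ηhat n ω, hηω.le⟩).trans_lt hdev
  linarith [hsepκ _ (hθhatΘ n ω) hω, min_le_right (1 / 2 : ℝ) (κ / 4)]

/-- Lemma 2.1: consistency of semiparametric Z-estimators with bundled parameters. -/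
theorem consistency_of_bundled_Z_estimators
    {d : ℕ} (hd : 1 ≤ d) {E : Type*} [NormedAddCommGroup E] [NormedSpace ℝ E]
    {Ω : Type*} [MeasurableSpace Ω] (P : Measure Ω) [IsProbabilityMeasure P]
    (Θ : Set (Euc d)) (hΘ : IsCompact Θ)
    (θ0 : Euc d) (hθ0 : θ0 ∈ Θ)
    (Ψn : ℕ → Ω → Euc d → E → Euc d)
    (Ψ : Euc d → E → Euc d)
    (η0 : Euc d → E)
    (hzero : Ψ θ0 (η0 θ0) = 0)
    (θhat : ℕ → Ω → Euc d) (hθhatΘ : ∀ n ω, θhat n ω ∈ Θ)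
    (ηhat : ℕ → Ω → Euc d → E)
    -- (a) θ0 is the unique, well-separated zero of θ ↦ Ψ(θ, η0(θ)) on Θ
    (hsep : ∀ ε : ℝ, 0 < ε → ∃ δ : ℝ, 0 < δ ∧
      ∀ θ ∈ Θ, ε ≤ ‖θ - θ0‖ → δ ≤ ‖Ψ θ (η0 θ)‖)
    -- (b) ‖η̂_n − η0‖ → 0 in probability (sup-norm over Θ)
    (hηcons : oP P (fun n ω => ⨆ θ : Θ, ‖ηhat n ω θ - η0 θ‖) (fun _ => 1))
    -- (c) uniform convergence condition (2.3)
    (hequic : ∀ δ : ℕ → ℝ, (∀ n, 0 < δ n) → Antitone δ →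
      Filter.Tendsto δ Filter.atTop (nhds 0) →
      oP P (fun n ω =>
        ⨆ θ : Θ, ⨆ η : {η : Euc d → E // (⨆ θ' : Θ, ‖η θ' - η0 θ'‖) ≤ δ n},
          ‖Ψn n ω θ (η.1 θ) - Ψ θ (η0 θ)‖ /
            (1 + ‖Ψn n ω θ (η.1 θ)‖ + ‖Ψ θ (η0 θ)‖)) (fun _ => 1))
    -- the near-root property Ψ_n(θ̂_n, η̂_n(θ̂_n)) = o_p(1)
    (hroot : oP P (fun n ω => ‖Ψn n ω (θhat n ω) (ηhat n ω (θhat n ω))‖) (fun _ => 1)) :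
    -- conclusion: θ̂_n → θ0 in probability
    oP P (fun n ω => ‖θhat n ω - θ0‖) (fun _ => 1) :=
  consistency_of_bundled_Z_estimators_general P Θ θ0 Ψn Ψ η0 θhat hθhatΘ ηhat hsep hηcons hequic
    hroot
end
end

section
/- Tightness of the rescaled population estimating function at the estimator (equation (import) in the proof of Lemma 2.2). Assume: Ψ(θ0, η0(θ0)) = 0; Ψ_n(θ̂_n, η̂_n(θ̂_n)) = o_p(n^{-1/2}); (i) stochastic equicontinuity: |√n(Ψ_n − Ψ)(θ̂_n, η̂_n(θ̂_n)) − √n(Ψ_n − Ψ)(θ0, η0(θ0))| / (1 + √n|Ψ_n(θ̂_n, η̂_n(θ̂_n))| + √n|Ψ(θ̂_n, η̂_n(θ̂_n))|) = o_p(1); and (ii) √n Ψ_n(θ0, η0(θ0)) = O_p(1). Then √n |Ψ(θ̂_n, η̂_n(θ̂_n))| = O_p(1). -/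
open MeasureTheory Filter Topology ProbabilityTheory
open scoped ENNReal NNReal InnerProductSpace

noncomputable section

section Tightness

variable {Ω : Type*} [MeasurableSpace Ω] {P : Measure Ω}

theorem measure_le_ofReal_of_subset_union {U S T : Set Ω} {ε : ℝ} (hε : 0 ≤ ε)
    (hU : U ⊆ S ∪ T) (hS : P S ≤ ENNReal.ofReal (ε / 2)) (hT : P T ≤ ENNReal.ofReal (ε / 2)) :
    P U ≤ ENNReal.ofReal ε :=
  calc P U ≤ P S + P T := (measure_mono hU).trans (measure_union_le S T)
    _ ≤ ENNReal.ofReal (ε / 2) + ENNReal.ofReal (ε / 2) := add_le_add hS hT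
    _ = ENNReal.ofReal ε := by rw [← ENNReal.ofReal_add (by linarith) (by linarith), add_halves]

theorem oP.OP {ξ : ℕ → Ω → ℝ} {a : ℕ → ℝ} (h : oP P ξ a) : OP P ξ a := by
  intro ε hε
  refine ⟨1, ((h 1 one_pos).eventually_lt_const (ENNReal.ofReal_pos.mpr hε)).mono
    fun n hn => le_trans (measure_mono fun ω (hω : 1 * a n < ξ n ω) => hω.le) hn.le⟩

theorem OP.add {ξ ζ : ℕ → Ω → ℝ} {a : ℕ → ℝ} (hξ : OP P ξ a) (hζ : OP P ζ a) :
    OP P (ξ + ζ) a := by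
  intro ε hε
  obtain ⟨M, hM⟩ := hξ (ε / 2) (by linarith)
  obtain ⟨K, hK⟩ := hζ (ε / 2) (by linarith)
  refine ⟨M + K, ?_⟩
  filter_upwards [hM, hK] with n hMn hKn
  refine measure_le_ofReal_of_subset_union hε.le (fun ω hω => ?_) hMn hKn
  by_contra hcover
  simp only [Set.mem_union, Set.mem_ofPred_eq, not_or, not_lt] at hcover
  simp only [Set.mem_ofPred_eq, Pi.add_apply] at hω
  linarith

theorem OP.const_mul {ξ : ℕ → Ω → ℝ} {a : ℕ → ℝ} (hξ : OP P ξ a) {c : ℝ} (hc : 0 ≤ c) :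
    OP P (fun n ω => c * ξ n ω) a := by
  intro ε hε
  obtain ⟨M, hM⟩ := hξ ε hε
  refine ⟨c * M, hM.mono fun n hn => le_trans (measure_mono fun ω hω => ?_) hn⟩
  simp only [Set.mem_ofPred_eq, mul_assoc] at hω ⊢
  exact lt_of_mul_lt_mul_left hω hc

theorem OP_const (c : ℝ) : OP P (fun _ _ => c) (fun _ => 1) :=
  fun _ _ => ⟨c, Eventually.of_forall fun _ => by simp⟩

theorem OP.of_le_of_tendsto_measure {ξ ζ : ℕ → Ω → ℝ} {a : ℕ → ℝ} (hζ : OP P ζ a)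
    {bad : ℕ → Set Ω} (hbad : Tendsto (fun n => P (bad n)) atTop (𝓝 0))
    (hle : ∀ n ω, ω ∉ bad n → ξ n ω ≤ ζ n ω) : OP P ξ a := by
  intro ε hε
  obtain ⟨M, hM⟩ := hζ (ε / 2) (by linarith)
  refine ⟨M, ?_⟩
  filter_upwards [hM, hbad.eventually_lt_const (ENNReal.ofReal_pos.mpr (half_pos hε))]
    with n hMn hbadn
  refine measure_le_ofReal_of_subset_union hε.le (fun ω hω => ?_) hMn hbadn.le
  by_cases hω' : ω ∈ bad n
  · exact Or.inr hω'
  · exact Or.inl (lt_of_lt_of_le hω (hle n ω hω'))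

end Tightness

theorem le_of_le_add_of_div_one_add_lt_half {A B C N : ℝ} (hA : 0 ≤ A) (hB : 0 ≤ B)
    (hle : B ≤ A + N + C) (hN : N / (1 + A + B) < 1 / 2) : B ≤ 1 + 3 * A + 2 * C := by
  rw [div_lt_iff₀ (by linarith)] at hN
  linarith

theorem mul_norm_le_of_smul_sub {E : Type*} [NormedAddCommGroup E] [NormedSpace ℝ E]
    {s : ℝ} (hs : 0 ≤ s) (a b c : E) :
    s * ‖b‖ ≤ s * ‖a‖ + ‖s • (a - b) - s • c‖ + s * ‖c‖ := by
  have hsplit : s • b = s • a - (s • (a - b) - s • c) - s • c := by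
    simp only [smul_sub]; abel
  calc s * ‖b‖ = ‖s • a - (s • (a - b) - s • c) - s • c‖ := by
        rw [← hsplit, norm_smul_of_nonneg hs]
    _ ≤ ‖s • a‖ + ‖s • (a - b) - s • c‖ + ‖s • c‖ :=
        (norm_sub_le _ _).trans (add_le_add_left (norm_sub_le _ _) _)
    _ = s * ‖a‖ + ‖s • (a - b) - s • c‖ + s * ‖c‖ := by
        rw [norm_smul_of_nonneg hs, norm_smul_of_nonneg hs]

theorem tightness_of_population_estimating_function_general
    {d : ℕ} {E : Type*} [NormedAddCommGroup E] [NormedSpace ℝ E]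
    {Ω : Type*} [MeasurableSpace Ω] (P : Measure Ω)
    (θ0 : Euc d)
    (Ψn : ℕ → Ω → Euc d → E → Euc d)
    (Ψ : Euc d → E → Euc d)
    (η0 : Euc d → E)
    (hzero : Ψ θ0 (η0 θ0) = 0)
    (θhat : ℕ → Ω → Euc d)
    (ηhat : ℕ → Ω → Euc d → E)
    -- Ψ_n(θ̂_n, η̂_n(θ̂_n)) = o_p(n^{-1/2})
    (hroot : oP P (fun n ω => Real.sqrt n * ‖Ψn n ω (θhat n ω) (ηhat n ω (θhat n ω))‖)
      (fun _ => 1))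
    -- (i) stochastic equicontinuity
    (hse : oP P (fun n ω =>
        ‖(Real.sqrt n) • (Ψn n ω (θhat n ω) (ηhat n ω (θhat n ω)) -
              Ψ (θhat n ω) (ηhat n ω (θhat n ω))) -
          (Real.sqrt n) • (Ψn n ω θ0 (η0 θ0) - Ψ θ0 (η0 θ0))‖ /
          (1 + Real.sqrt n * ‖Ψn n ω (θhat n ω) (ηhat n ω (θhat n ω))‖ +
            Real.sqrt n * ‖Ψ (θhat n ω) (ηhat n ω (θhat n ω))‖)) (fun _ => 1))
    -- (ii) √n Ψ_n(θ0, η0(θ0)) = O_p(1)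
    (htight : OP P (fun n ω => Real.sqrt n * ‖Ψn n ω θ0 (η0 θ0)‖) (fun _ => 1))
 :
    OP P (fun n ω => Real.sqrt n * ‖Ψ (θhat n ω) (ηhat n ω (θhat n ω))‖) (fun _ => 1) := by
  simp only [hzero, sub_zero] at hse
  have hbound : OP P (fun n ω => 1 + 3 * (Real.sqrt n *
      ‖Ψn n ω (θhat n ω) (ηhat n ω (θhat n ω))‖) + 2 * (Real.sqrt n * ‖Ψn n ω θ0 (η0 θ0)‖))
      (fun _ => 1) :=
    ((OP_const 1).add (hroot.OP.const_mul (by norm_num))).add (htight.const_mul (by norm_num))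
  -- Outside the event where the self-normalised remainder of (i) exceeds 1/2,
  -- the triangle inequality bounds √n‖Ψ‖ by the tight quantity above.
  refine hbound.of_le_of_tendsto_measure (hse (1 / 2) (by norm_num)) fun n ω hω => ?_
  refine le_of_le_add_of_div_one_add_lt_half (by positivity) (by positivity)
    (mul_norm_le_of_smul_sub (Real.sqrt_nonneg _) _ _ _) ?_
  simpa only [Set.mem_ofPred_eq, not_le, mul_one] using hω

/-- Equation (import) in the proof of Lemma 2.2:
`√n |Ψ(θ̂_n, η̂_n(θ̂_n))| = O_p(1)`. -/
theorem tightness_of_population_estimating_function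
    {d : ℕ} (hd : 1 ≤ d) {E : Type*} [NormedAddCommGroup E] [NormedSpace ℝ E]
    {Ω : Type*} [MeasurableSpace Ω] (P : Measure Ω) [IsProbabilityMeasure P]
    (Θ : Set (Euc d)) (hΘ : IsCompact Θ)
    (θ0 : Euc d) (hθ0 : θ0 ∈ Θ)
    (Ψn : ℕ → Ω → Euc d → E → Euc d)
    (Ψ : Euc d → E → Euc d)
    (η0 : Euc d → E)
    (hzero : Ψ θ0 (η0 θ0) = 0)
    (θhat : ℕ → Ω → Euc d) (hθhatΘ : ∀ n ω, θhat n ω ∈ Θ)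
    (ηhat : ℕ → Ω → Euc d → E)
    -- Ψ_n(θ̂_n, η̂_n(θ̂_n)) = o_p(n^{-1/2})
    (hroot : oP P (fun n ω => Real.sqrt n * ‖Ψn n ω (θhat n ω) (ηhat n ω (θhat n ω))‖)
      (fun _ => 1))
    -- (i) stochastic equicontinuity
    (hse : oP P (fun n ω =>
        ‖(Real.sqrt n) • (Ψn n ω (θhat n ω) (ηhat n ω (θhat n ω)) -
              Ψ (θhat n ω) (ηhat n ω (θhat n ω))) -
          (Real.sqrt n) • (Ψn n ω θ0 (η0 θ0) - Ψ θ0 (η0 θ0))‖ /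
          (1 + Real.sqrt n * ‖Ψn n ω (θhat n ω) (ηhat n ω (θhat n ω))‖ +
            Real.sqrt n * ‖Ψ (θhat n ω) (ηhat n ω (θhat n ω))‖)) (fun _ => 1))
    -- (ii) √n Ψ_n(θ0, η0(θ0)) = O_p(1)
    (htight : OP P (fun n ω => Real.sqrt n * ‖Ψn n ω θ0 (η0 θ0)‖) (fun _ => 1))
 :
    OP P (fun n ω => Real.sqrt n * ‖Ψ (θhat n ω) (ηhat n ω (θhat n ω))‖) (fun _ => 1) :=
  tightness_of_population_estimating_function_general P θ0 Ψn Ψ η0 hzero θhat ηhat hroot hse htight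
end
end
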